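/- Define T_n to be F_n with its last two letters exchanged (i.e., T_n = W_n·(vu) where F_n = W_n·(uv)). Then for all n ≥ 2, T_{n+1} = F_n · T_{n-1}. -/

import Mathlib

/-- The two-letter alphabet: `A` and `B`. -/
inductive Letter : Type
  | A : Letter
  | B : Letter
  deriving DecidableEq, Repr

open Letter

/-- The Fibonacci substitution θ : a → ab, b → a. -/
def theta : Letter → List Letter
  | A => [A, B]
  | B => [A]

/-- Extension of the substitution to words, by concatenation. -/
def substWord (w : List Letter) : List Letter := w.flatMap theta

/-- The n-th finite Fibonacci word F_n = θ^n(a). -/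
def FibWord (n : ℕ) : List Letter := substWord^[n] [A]

/-- The infinite Fibonacci word (each F_n is a prefix of all later ones,
and `FibWord (k+1)` has length `fib (k+3) ≥ k+1`, so index `k` is defined). -/
def FibSeq (k : ℕ) : Letter := (FibWord (k + 1)).getD k A

/-- `Wword n` is the Fibonacci word F_n with its final two letters removed. -/
def Wword (n : ℕ) : List Letter := (FibWord n).dropLast.dropLast

/-- The final two letters `uv` of F_n. -/
def lastTwo (n : ℕ) : List Letter := (FibWord n).drop ((FibWord n).length - 2)

/-- `Tword n` is F_n with its final two letters exchanged: if F_n = W_n·(uv)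
then T_n = W_n·(vu). -/
def Tword (n : ℕ) : List Letter := Wword n ++ (lastTwo n).reverse

/-! Exchanging the last two letters of a word of length at least two commutes with prepending
any word. Since `F (n + 1) = F n ++ F (n - 1)` and `F (n - 1)` has length at least two when
`n ≥ 2`, exchanging the last two letters of `F (n + 1)` only touches the factor `F (n - 1)`. -/

def swapLastTwo {α : Type*} (w : List α) : List α :=
  w.dropLast.dropLast ++ (w.drop (w.length - 2)).reverse

theorem swapLastTwo_append {α : Type*} (a : List α) {w : List α} (hw : 2 ≤ w.length) :
    swapLastTwo (a ++ w) = a ++ swapLastTwo w := by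
  have hw₁ : w ≠ [] := List.ne_nil_of_length_pos (by omega)
  have hw₂ : w.dropLast ≠ [] := List.ne_nil_of_length_pos (by rw [List.length_dropLast]; omega)
  have hdrop : (a ++ w).drop ((a ++ w).length - 2) = w.drop (w.length - 2) := by
    rw [List.length_append, List.drop_append, List.drop_eq_nil_of_le (by omega), List.nil_append]
    congr 1
    omega
  rw [swapLastTwo, hdrop, List.dropLast_append_of_ne_nil hw₁,
    List.dropLast_append_of_ne_nil hw₂, List.append_assoc, swapLastTwo]

theorem tword_eq_swapLastTwo (n : ℕ) : Tword n = swapLastTwo (FibWord n) := rfl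

theorem substWord_append (u w : List Letter) :
    substWord (u ++ w) = substWord u ++ substWord w :=
  List.flatMap_append

theorem fibWord_succ (n : ℕ) : FibWord (n + 1) = substWord (FibWord n) :=
  Function.iterate_succ_apply' substWord n [A]

theorem fibWord_add_two (n : ℕ) : FibWord (n + 2) = FibWord (n + 1) ++ FibWord n := by
  induction n with
  | zero => rfl
  | succ n ih =>
    rw [fibWord_succ (n + 2), ih, substWord_append, ← fibWord_succ, ← fibWord_succ, ih]

theorem two_le_length_fibWord_succ (n : ℕ) : 2 ≤ (FibWord (n + 1)).length := by
  induction n with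
  | zero => decide
  | succ n ih =>
    rw [fibWord_add_two, List.length_append]
    omega

/-- End letter pair reversal rule: T_{n+1} = F_n · T_{n-1} for n ≥ 2. -/
theorem fib_word_T_recursion (n : ℕ) (hn : 2 ≤ n) :
    Tword (n + 1) = FibWord n ++ Tword (n - 1) := by
  obtain ⟨k, rfl⟩ : ∃ k, n = k + 2 := ⟨n - 2, by omega⟩
  rw [tword_eq_swapLastTwo, fibWord_add_two (k + 1),
    swapLastTwo_append _ (two_le_length_fibWord_succ k)]
  rfl
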